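/- arXiv:2407.03134 — 3 statements merged into one kernel-verified Lean document; each statement's English description precedes it below -/
import Mathlib

section
/- For c > 0, as ε → 0⁺, ∫_{1+ε}^{c²+1} √(c²+1−v)/(v−1) dv = 2c·log(2) − 2c + 2c·log c − c·log ε + O(ε). -/
open Real Asymptotics

/-!
Put `s = √(c² - u)`. Since `c² - s² = u`, the integrand splits as
`√(c² - u) / u = c / u - 1 / (c + s)`, and `1 / (c + s)` is the derivative of the function
`finitePart c u = 2c log (c + s) - 2s`, which is smooth across `u = 0`. Hence
`∫_ε^{c²} √(c² - u) / u du = finitePart c ε - c log ε`, and the expansion is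
`finitePart c ε = finitePart c 0 + O(ε)` with `finitePart c 0 = 2c log (2c) - 2c`.
-/

noncomputable def finitePart (c u : ℝ) : ℝ :=
  2 * c * log (c + √(c ^ 2 - u)) - 2 * √(c ^ 2 - u)

section

variable {c : ℝ}

theorem continuous_finitePart (hc : 0 < c) : Continuous (finitePart c) := by
  unfold finitePart
  have hsqrt : Continuous fun u : ℝ => √(c ^ 2 - u) := by fun_prop
  refine (continuous_const.mul ((continuous_const.add hsqrt).log fun u => ?_)).sub
    (continuous_const.mul hsqrt)
  exact (add_pos_of_pos_of_nonneg hc (sqrt_nonneg _)).ne'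

theorem hasDerivAt_finitePart {u : ℝ} (hc : 0 < c) (hu : u < c ^ 2) :
    HasDerivAt (finitePart c) (1 / (c + √(c ^ 2 - u))) u := by
  have hpos : 0 < c ^ 2 - u := by linarith
  have hs : 0 < √(c ^ 2 - u) := sqrt_pos.2 hpos
  have hsqrt : HasDerivAt (fun u => √(c ^ 2 - u)) (-1 / (2 * √(c ^ 2 - u))) u := by
    simpa using ((hasDerivAt_id u).const_sub (c ^ 2)).sqrt hpos.ne'
  have hlog := (hsqrt.const_add c).log (by positivity)
  refine ((hlog.const_mul (2 * c)).sub (hsqrt.const_mul 2)).congr_deriv ?_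
  field_simp
  ring

theorem finitePart_zero (hc : 0 < c) :
    finitePart c 0 = 2 * c * log 2 - 2 * c + 2 * c * log c := by
  rw [finitePart, sub_zero, sqrt_sq hc.le, ← two_mul, log_mul two_ne_zero hc.ne']
  ring

theorem finitePart_sq : finitePart c (c ^ 2) = c * log (c ^ 2) := by
  rw [finitePart, sub_self, sqrt_zero, add_zero, log_pow]
  push_cast
  ring

theorem sqrt_sub_div_eq {u : ℝ} (hc : 0 < c) (hu : 0 < u) (huc : u ≤ c ^ 2) :
    √(c ^ 2 - u) / u = c / u - 1 / (c + √(c ^ 2 - u)) := by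
  have hs : √(c ^ 2 - u) ^ 2 = c ^ 2 - u := sq_sqrt (by linarith)
  have : 0 < c + √(c ^ 2 - u) := by positivity
  field_simp
  linear_combination hs

theorem integral_sqrt_sub_div_self {ε : ℝ} (hc : 0 < c) (hε : 0 < ε) (hεc : ε ≤ c ^ 2) :
    ∫ u in ε..c ^ 2, √(c ^ 2 - u) / u = finitePart c ε - c * log ε := by
  have hderiv : ∀ u ∈ Set.Ioo ε (c ^ 2),
      HasDerivAt (fun u => c * log u - finitePart c u) (√(c ^ 2 - u) / u) u := by
    intro u hu
    rw [sqrt_sub_div_eq hc (hε.trans hu.1) hu.2.le, div_eq_mul_inv]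
    exact ((hasDerivAt_log (hε.trans hu.1).ne').const_mul c).sub (hasDerivAt_finitePart hc hu.2)
  have hcont : ContinuousOn (fun u => c * log u - finitePart c u) (Set.Icc ε (c ^ 2)) :=
    (continuousOn_const.mul (continuousOn_log.mono fun u hu => (hε.trans_le hu.1).ne')).sub
      (continuous_finitePart hc).continuousOn
  have hint : IntervalIntegrable (fun u => √(c ^ 2 - u) / u) MeasureTheory.volume ε (c ^ 2) := by
    refine ContinuousOn.intervalIntegrable ?_
    rw [Set.uIcc_of_le hεc]
    exact (by fun_prop : Continuous fun u : ℝ => √(c ^ 2 - u)).continuousOn.div continuousOn_id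
      fun u hu => (hε.trans_le hu.1).ne'
  rw [intervalIntegral.integral_eq_sub_of_hasDeriv_right_of_le hεc hcont
    (fun u hu => (hderiv u hu).hasDerivWithinAt) hint, finitePart_sq]
  ring

end

/-- For c > 0, as ε → 0⁺,
∫_{1+ε}^{c²+1} √(c²+1−v)/(v−1) dv = 2c·log 2 − 2c + 2c·log c − c·log ε + O(ε). -/
theorem stmt_5 (c : ℝ) (hc : 0 < c) :
    (fun ε : ℝ =>
        (∫ v in (1 + ε)..(c ^ 2 + 1), Real.sqrt (c ^ 2 + 1 - v) / (v - 1))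
          - (2 * c * Real.log 2 - 2 * c + 2 * c * Real.log c - c * Real.log ε))
      =O[nhdsWithin 0 (Set.Ioi 0)] (fun ε : ℝ => ε) := by
  have hshift (ε : ℝ) : ∫ v in (1 + ε)..(c ^ 2 + 1), √(c ^ 2 + 1 - v) / (v - 1)
      = ∫ u in ε..c ^ 2, √(c ^ 2 - u) / u := by
    have := intervalIntegral.integral_comp_sub_right (fun u => √(c ^ 2 - u) / u) (1 : ℝ)
      (a := 1 + ε) (b := c ^ 2 + 1)
    rw [add_sub_cancel_left, add_sub_cancel_right] at this
    rw [← this]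
    congr 1 with v
    ring_nf
  have hO := (hasDerivAt_finitePart hc (by positivity : (0 : ℝ) < c ^ 2)).isBigO_sub
  refine (hO.mono nhdsWithin_le_nhds).congr' ?_ (by simp)
  filter_upwards [Ioc_mem_nhdsGT (by positivity : (0 : ℝ) < c ^ 2)] with ε ⟨hε, hεc⟩
  rw [hshift, integral_sqrt_sub_div_self hc hε hεc, finitePart_zero hc]
  ring
end

section
/- Let γ = ((a,b),(c,d)) ∈ SL₂(ℝ) and let v(w) = −arctan(Re w / Im w) for w ∈ ℍ. Then for y > 0 and θ ∈ (−π/2, π/2), tan(v(γ · (e^{iθ} i y))) = (ad+bc)·tan θ − (acy + bd/y)/cos θ, where γ acts by Möbius transformation. -/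
open Real Complex

/-
The real Möbius map w ↦ (aw+b)/(cw+d) sends w to a point with real part
(ac|w|² + bd + (ad+bc) Re w)/|cw+d|² and imaginary part (ad−bc) Im w/|cw+d|², so the
ratio Re/Im of the image no longer involves the denominator. For w = e^{iθ}·iy one has
Re w = −y sin θ, Im w = y cos θ and |w|² = y², and tan ∘ (−arctan) is negation.
-/

lemma real_mobius_denom_ne_zero {a b c d : ℝ} (hdet : a * d - b * c ≠ 0) {w : ℂ}
    (hw : w.im ≠ 0) : (c : ℂ) * w + d ≠ 0 := by
  intro h
  have hc : c = 0 := by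
    simpa [hw] using congrArg Complex.im h
  have hd : d = 0 := by
    simpa [hc] using congrArg Complex.re h
  simp [hc, hd] at hdet

lemma real_mobius_re (a b c d : ℝ) (w : ℂ) :
    (((a : ℂ) * w + b) / ((c : ℂ) * w + d)).re
      = (a * c * normSq w + b * d + (a * d + b * c) * w.re) / normSq ((c : ℂ) * w + d) := by
  rw [Complex.div_re, ← add_div]
  simp only [normSq_apply, mul_re, mul_im, add_re, add_im, ofReal_re, ofReal_im]
  ring_nf

lemma real_mobius_im (a b c d : ℝ) (w : ℂ) :
    (((a : ℂ) * w + b) / ((c : ℂ) * w + d)).im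
      = (a * d - b * c) * w.im / normSq ((c : ℂ) * w + d) := by
  rw [Complex.div_im, ← sub_div]
  simp only [mul_re, mul_im, add_re, add_im, ofReal_re, ofReal_im]
  ring_nf

lemma real_mobius_re_div_im {a b c d : ℝ} {w : ℂ} (hw : (c : ℂ) * w + d ≠ 0) :
    (((a : ℂ) * w + b) / ((c : ℂ) * w + d)).re / (((a : ℂ) * w + b) / ((c : ℂ) * w + d)).im
      = (a * c * normSq w + b * d + (a * d + b * c) * w.re) / ((a * d - b * c) * w.im) := by
  rw [real_mobius_re, real_mobius_im, div_div_div_cancel_right₀ (normSq_pos.mpr hw).ne']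

lemma exp_mul_I_mul_I_mul_ofReal_re (θ y : ℝ) :
    (Complex.exp (θ * I) * (I * y)).re = -(y * Real.sin θ) := by
  simp [Complex.exp_mul_I, mul_re, mul_im, ← ofReal_cos, ← ofReal_sin]
  ring

lemma exp_mul_I_mul_I_mul_ofReal_im (θ y : ℝ) :
    (Complex.exp (θ * I) * (I * y)).im = y * Real.cos θ := by
  simp [Complex.exp_mul_I, mul_re, mul_im, ← ofReal_cos, ← ofReal_sin]
  ring

/-- For γ = ((a,b),(c,d)) ∈ SL₂(ℝ), y > 0 and θ ∈ (−π/2, π/2), with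
w = e^{iθ}·iy and v(·) = −arctan(Re/Im), one has
tan(v(γw)) = (ad+bc)·tan θ − (acy + bd/y)/cos θ. -/
theorem stmt_8 (a b c d : ℝ) (hdet : a * d - b * c = 1)
    (y θ : ℝ) (hy : 0 < y) (hθ₁ : -(π / 2) < θ) (hθ₂ : θ < π / 2) :
    let w : ℂ := Complex.exp (θ * Complex.I) * (Complex.I * (y : ℂ))
    let gw : ℂ := ((a : ℂ) * w + b) / ((c : ℂ) * w + d)
    Real.tan (-Real.arctan (gw.re / gw.im))
      = (a * d + b * c) * Real.tan θ - (a * c * y + b * d / y) / Real.cos θ := by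
  intro w gw
  have hcos : 0 < Real.cos θ := cos_pos_of_mem_Ioo ⟨hθ₁, hθ₂⟩
  have hwre : w.re = -(y * Real.sin θ) := exp_mul_I_mul_I_mul_ofReal_re θ y
  have hwim : w.im = y * Real.cos θ := exp_mul_I_mul_I_mul_ofReal_im θ y
  have hden : (c : ℂ) * w + d ≠ 0 :=
    real_mobius_denom_ne_zero (by rw [hdet]; exact one_ne_zero) (by rw [hwim]; positivity)
  rw [Real.tan_neg, Real.tan_arctan, real_mobius_re_div_im hden, hdet, normSq_apply, hwre, hwim,
    Real.tan_eq_sin_div_cos]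
  field_simp
  linear_combination (-(a * c * y ^ 2)) * Real.sin_sq_add_cos_sq θ
end

section
/- Let γ = ((a,b),(c,d)) ∈ SL₂(ℝ). Then the derivative at θ = 0 of θ ↦ tan(v(γ·(e^{iθ} i y))) equals B(γ) = ad + bc, for every y > 0. -/
/-!
For `γ = ((a,b),(c,d))` with `ad - bc = 1`, expanding `(az+b)(c z̄+d)` gives
`Re (γ z) / Im (γ z) = (ac|z|² + bd + (ad+bc) Re z) / Im z`. At `z = e^{iθ} iy` this reads
`tan (v (γ z)) = (ad+bc) tan θ - (acy + bd/y) / cos θ`, whose derivative at `θ = 0` is `ad + bc`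
because `tan' 0 = 1` and `(1/cos)' 0 = 0`.
-/

open Real Complex

theorem moebius_re_div_im {a b c d : ℝ} (hdet : a * d - b * c = 1) (z : ℂ) :
    ((a * z + b) / (c * z + d)).re / ((a * z + b) / (c * z + d)).im
      = (a * c * normSq z + b * d + (a * d + b * c) * z.re) / z.im := by
  by_cases hden : (c : ℂ) * z + d = 0
  · -- `ad - bc = 1` excludes `c = d = 0`, so `z` is real and both sides are `x / 0 = 0`.
    have hcz : c * z.im = 0 := by simpa using congrArg Complex.im hden
    have him : z.im = 0 := by
      rcases mul_eq_zero.mp hcz with hc | him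
      · have hd : d = 0 := by simpa [hc] using congrArg Complex.re hden
        simp [hc, hd] at hdet
      · exact him
    simp [hden, him]
  · have hnormSq : normSq ((c : ℂ) * z + d) ≠ 0 := normSq_eq_zero.not.mpr hden
    rw [div_re, div_im, ← add_div, ← sub_div, div_div_div_cancel_right₀ hnormSq]
    simp only [add_re, add_im, mul_re, mul_im, ofReal_re, ofReal_im, normSq_apply]
    congr 1
    · ring
    · linear_combination z.im * hdet

theorem re_exp_mul_I_mul_I (θ y : ℝ) : (exp (θ * I) * (I * y)).re = -(y * Real.sin θ) := by
  rw [exp_mul_I]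
  simp [mul_comm, sin_ofReal_re, cos_ofReal_re]

theorem im_exp_mul_I_mul_I (θ y : ℝ) : (exp (θ * I) * (I * y)).im = y * Real.cos θ := by
  rw [exp_mul_I]
  simp [mul_comm, sin_ofReal_re, cos_ofReal_re]

theorem normSq_exp_mul_I_mul_I (θ y : ℝ) : normSq (exp (θ * I) * (I * y)) = y ^ 2 := by
  simp [normSq_eq_norm_sq, norm_exp_ofReal_mul_I]

theorem hasDerivAt_mul_sin_add_div_cos_zero (p q : ℝ) :
    HasDerivAt (fun θ => (p * Real.sin θ + q) / Real.cos θ) p 0 := by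
  simpa using (((Real.hasDerivAt_sin 0).const_mul p).add_const q).fun_div
    (Real.hasDerivAt_cos 0) (by simp)

/-- For γ = ((a,b),(c,d)) ∈ SL₂(ℝ) and y > 0, the derivative at θ = 0 of
θ ↦ tan(v(γ·(e^{iθ}·iy))), where v(w) = −arctan(Re w/Im w), equals
B(γ) = ad + bc. -/
theorem stmt_9 (a b c d : ℝ) (hdet : a * d - b * c = 1) (y : ℝ) (hy : 0 < y) :
    HasDerivAt (fun θ : ℝ =>
        Real.tan (-Real.arctan
          ((((a : ℂ) * (Complex.exp (θ * Complex.I) * (Complex.I * (y : ℂ))) + b) /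
            ((c : ℂ) * (Complex.exp (θ * Complex.I) * (Complex.I * (y : ℂ))) + d)).re /
           (((a : ℂ) * (Complex.exp (θ * Complex.I) * (Complex.I * (y : ℂ))) + b) /
            ((c : ℂ) * (Complex.exp (θ * Complex.I) * (Complex.I * (y : ℂ))) + d)).im)))
      (a * d + b * c) 0 := by
  convert hasDerivAt_mul_sin_add_div_cos_zero (a * d + b * c) (-(a * c * y + b * d / y))
    using 2 with θ
  rw [Real.tan_neg, Real.tan_arctan, moebius_re_div_im hdet, re_exp_mul_I_mul_I,
    im_exp_mul_I_mul_I, normSq_exp_mul_I_mul_I]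
  field_simp
  ring
end
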